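/- Let f = (y³+x⁷)(y³+x¹⁰) ∈ ℂ[x,y]. Then the classes of x⁵y⁴, x¹⁰y², x¹⁴y in ℂ[[x,y]]/⟨f, ∂f/∂x, ∂f/∂y⟩ are ℂ-linearly independent. -/

import Mathlib

noncomputable section

/-- The formal power series ring ℂ[[x,y]]. -/
abbrev R2 := MvPowerSeries (Fin 2) ℂ

/-- Partial derivative of a formal power series in two variables. -/
def pder (i : Fin 2) (f : R2) : R2 :=
  fun d => ((d i : ℕ) + 1 : ℂ) * MvPowerSeries.coeff (d + Finsupp.single i 1) f

/-- The maximal ideal 𝔪 = ⟨x,y⟩ of ℂ[[x,y]]. -/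
def mIdeal : Ideal R2 := Ideal.span {MvPowerSeries.X 0, MvPowerSeries.X 1}

/-- dim_ℂ B/A for ideals A ⊆ B of ℂ[[x,y]]. -/
def qdim (A B : Ideal R2) : ℕ :=
  Module.finrank ℂ ((B.map (Ideal.Quotient.mk A)).restrictScalars ℂ)
/-- f = (y³+x⁷)(y³+x¹⁰) ∈ ℂ[[x,y]]. -/
def fEx : R2 :=
  (MvPowerSeries.X 1 ^ 3 + MvPowerSeries.X 0 ^ 7) *
  (MvPowerSeries.X 1 ^ 3 + MvPowerSeries.X 0 ^ 10)

open MvPowerSeries Finsupp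

/-- exponent vector (a,b) -/
def ee (a b : ℕ) : Fin 2 →₀ ℕ := Finsupp.single 0 a + Finsupp.single 1 b

lemma ee_apply0 (a b : ℕ) : ee a b 0 = a := by simp [ee, Finsupp.single_apply]
lemma ee_apply1 (a b : ℕ) : ee a b 1 = b := by simp [ee, Finsupp.single_apply]

lemma ee_eq_iff (a b c d : ℕ) : ee a b = ee c d ↔ a = c ∧ b = d := by
  constructor
  · intro h
    constructor
    · have := congrArg (fun f => f 0) h; simpa [ee_apply0] using this
    · have := congrArg (fun f => f 1) h; simpa [ee_apply1] using this
  · rintro ⟨rfl, rfl⟩; rfl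

lemma ee_le_iff (a b c d : ℕ) : ee a b ≤ ee c d ↔ a ≤ c ∧ b ≤ d := by
  rw [Finsupp.le_def]
  constructor
  · intro h; exact ⟨by simpa [ee_apply0] using h 0, by simpa [ee_apply1] using h 1⟩
  · rintro ⟨h1, h2⟩ i
    fin_cases i <;> simp [ee_apply0, ee_apply1, h1, h2]

lemma ee_sub (a b c d : ℕ) : ee a b - ee c d = ee (a - c) (b - d) := by
  ext i
  fin_cases i <;> simp [Finsupp.tsub_apply, ee_apply0, ee_apply1]

lemma fEx_eq : fEx = monomial (ee 0 6) 1 + monomial (ee 7 3) 1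
    + monomial (ee 10 3) 1 + monomial (ee 17 0) 1 := by
  rw [fEx]
  rw [X_pow_eq, X_pow_eq (0 : Fin 2) 7, X_pow_eq (0 : Fin 2) 10]
  rw [add_mul, mul_add, mul_add, monomial_mul_monomial, monomial_mul_monomial,
    monomial_mul_monomial, monomial_mul_monomial]
  have h1 : Finsupp.single (1 : Fin 2) 3 + Finsupp.single 1 3 = ee 0 6 := by
    ext i; fin_cases i <;> simp [ee_apply0, ee_apply1, Finsupp.single_apply]
  have h2 : Finsupp.single (1 : Fin 2) 3 + Finsupp.single 0 10 = ee 10 3 := by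
    ext i; fin_cases i <;> simp [ee_apply0, ee_apply1, Finsupp.single_apply]
  have h3 : Finsupp.single (0 : Fin 2) 7 + Finsupp.single 1 3 = ee 7 3 := by
    ext i; fin_cases i <;> simp [ee_apply0, ee_apply1, Finsupp.single_apply]
  have h4 : Finsupp.single (0 : Fin 2) 7 + Finsupp.single 0 10 = ee 17 0 := by
    ext i; fin_cases i <;> simp [ee_apply0, ee_apply1, Finsupp.single_apply]
  rw [h1, h2, h3, h4]
  ring

lemma coeff_pder (i : Fin 2) (f : R2) (d : Fin 2 →₀ ℕ) :
    MvPowerSeries.coeff d (pder i f) =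
      ((d i : ℕ) + 1 : ℂ) * MvPowerSeries.coeff (d + Finsupp.single i 1) f := rfl

lemma eq_ee (d : Fin 2 →₀ ℕ) : d = ee (d 0) (d 1) := by
  ext i; fin_cases i <;> simp [ee_apply0, ee_apply1]

lemma ee_add_single0 (a b : ℕ) : ee a b + Finsupp.single 0 1 = ee (a+1) b := by
  ext i; fin_cases i <;> simp [ee_apply0, ee_apply1, Finsupp.single_apply]

lemma ee_add_single1 (a b : ℕ) : ee a b + Finsupp.single 1 1 = ee a (b+1) := by
  ext i; fin_cases i <;> simp [ee_apply0, ee_apply1, Finsupp.single_apply]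

set_option maxHeartbeats 1600000 in
lemma pderx_eq : pder 0 fEx = monomial (ee 6 3) 7 + monomial (ee 9 3) 10
    + monomial (ee 16 0) 17 := by
  ext d
  rw [coeff_pder, fEx_eq]
  rw [eq_ee d, ee_add_single0]
  simp only [map_add, coeff_monomial, ee_eq_iff, ee_apply0, ee_apply1]
  split_ifs <;>
    first
      | (exfalso; omega)
      | (exfalso; tauto)
      | (norm_num; all_goals (norm_cast; omega))

set_option maxHeartbeats 1600000 in
lemma pdery_eq : pder 1 fEx = monomial (ee 0 5) 6 + monomial (ee 7 2) 3
    + monomial (ee 10 2) 3 := by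
  ext d
  rw [coeff_pder, fEx_eq]
  rw [eq_ee d, ee_add_single1]
  simp only [map_add, coeff_monomial, ee_eq_iff, ee_apply0, ee_apply1]
  split_ifs <;>
    first
      | (exfalso; omega)
      | (exfalso; tauto)
      | (norm_num; all_goals (norm_cast; omega))

-- λ₁ = δ_(5,4) kills h·f, h·fx, h·fy
lemma v54_f (h : R2) : MvPowerSeries.coeff (ee 5 4) (h * fEx) = 0 := by
  rw [fEx_eq]
  simp only [mul_add, map_add, coeff_mul_monomial, ee_le_iff]
  norm_num

lemma v54_fx (h : R2) : MvPowerSeries.coeff (ee 5 4) (h * pder 0 fEx) = 0 := by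
  rw [pderx_eq]
  simp only [mul_add, map_add, coeff_mul_monomial, ee_le_iff]
  norm_num

lemma v54_fy (h : R2) : MvPowerSeries.coeff (ee 5 4) (h * pder 1 fEx) = 0 := by
  rw [pdery_eq]
  simp only [mul_add, map_add, coeff_mul_monomial, ee_le_iff]
  norm_num

-- λ₃ = δ_(14,1)
lemma v141_f (h : R2) : MvPowerSeries.coeff (ee 14 1) (h * fEx) = 0 := by
  rw [fEx_eq]
  simp only [mul_add, map_add, coeff_mul_monomial, ee_le_iff]
  norm_num

lemma v141_fx (h : R2) : MvPowerSeries.coeff (ee 14 1) (h * pder 0 fEx) = 0 := by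
  rw [pderx_eq]
  simp only [mul_add, map_add, coeff_mul_monomial, ee_le_iff]
  norm_num

lemma v141_fy (h : R2) : MvPowerSeries.coeff (ee 14 1) (h * pder 1 fEx) = 0 := by
  rw [pdery_eq]
  simp only [mul_add, map_add, coeff_mul_monomial, ee_le_iff]
  norm_num

-- λ₂ = δ_(10,2) - ½δ_(0,5) - ½δ_(3,5)
lemma v102_f (h : R2) : MvPowerSeries.coeff (ee 10 2) (h * fEx) = 0 := by
  rw [fEx_eq]
  simp only [mul_add, map_add, coeff_mul_monomial, ee_le_iff]
  norm_num

lemma v05_f (h : R2) : MvPowerSeries.coeff (ee 0 5) (h * fEx) = 0 := by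
  rw [fEx_eq]
  simp only [mul_add, map_add, coeff_mul_monomial, ee_le_iff]
  norm_num

lemma v35_f (h : R2) : MvPowerSeries.coeff (ee 3 5) (h * fEx) = 0 := by
  rw [fEx_eq]
  simp only [mul_add, map_add, coeff_mul_monomial, ee_le_iff]
  norm_num

lemma v102_fx (h : R2) : MvPowerSeries.coeff (ee 10 2) (h * pder 0 fEx) = 0 := by
  rw [pderx_eq]
  simp only [mul_add, map_add, coeff_mul_monomial, ee_le_iff]
  norm_num

lemma v05_fx (h : R2) : MvPowerSeries.coeff (ee 0 5) (h * pder 0 fEx) = 0 := by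
  rw [pderx_eq]
  simp only [mul_add, map_add, coeff_mul_monomial, ee_le_iff]
  norm_num

lemma v35_fx (h : R2) : MvPowerSeries.coeff (ee 3 5) (h * pder 0 fEx) = 0 := by
  rw [pderx_eq]
  simp only [mul_add, map_add, coeff_mul_monomial, ee_le_iff]
  norm_num

lemma v102_fy (h : R2) : MvPowerSeries.coeff (ee 10 2) (h * pder 1 fEx) =
    MvPowerSeries.coeff (ee 3 0) h * 3 + MvPowerSeries.coeff (ee 0 0) h * 3 := by
  rw [pdery_eq]
  simp only [mul_add, map_add, coeff_mul_monomial, ee_le_iff, ee_sub]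
  norm_num

lemma v05_fy (h : R2) : MvPowerSeries.coeff (ee 0 5) (h * pder 1 fEx) =
    MvPowerSeries.coeff (ee 0 0) h * 6 := by
  rw [pdery_eq]
  simp only [mul_add, map_add, coeff_mul_monomial, ee_le_iff, ee_sub]
  norm_num

lemma v35_fy (h : R2) : MvPowerSeries.coeff (ee 3 5) (h * pder 1 fEx) =
    MvPowerSeries.coeff (ee 3 0) h * 6 := by
  rw [pdery_eq]
  simp only [mul_add, map_add, coeff_mul_monomial, ee_le_iff, ee_sub]
  norm_num

def TI : Ideal R2 := Ideal.span {fEx, pder 0 fEx, pder 1 fEx}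

lemma mem_TI (p : R2) (hp : p ∈ TI) :
    ∃ A B C : R2, p = A * fEx + (B * pder 0 fEx + C * pder 1 fEx) := by
  rw [TI, Ideal.mem_span_insert] at hp
  obtain ⟨A, z, hz, rfl⟩ := hp
  rw [Ideal.mem_span_pair] at hz
  obtain ⟨B, C, hz⟩ := hz
  exact ⟨A, B, C, by rw [hz]⟩

lemma lam1_vanish (p : R2) (hp : p ∈ TI) : MvPowerSeries.coeff (ee 5 4) p = 0 := by
  obtain ⟨A, B, C, rfl⟩ := mem_TI p hp
  simp [map_add, v54_f, v54_fx, v54_fy]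

lemma lam3_vanish (p : R2) (hp : p ∈ TI) : MvPowerSeries.coeff (ee 14 1) p = 0 := by
  obtain ⟨A, B, C, rfl⟩ := mem_TI p hp
  simp [map_add, v141_f, v141_fx, v141_fy]

lemma lam2_vanish (p : R2) (hp : p ∈ TI) :
    MvPowerSeries.coeff (ee 10 2) p - (1/2) * MvPowerSeries.coeff (ee 0 5) p
      - (1/2) * MvPowerSeries.coeff (ee 3 5) p = 0 := by
  obtain ⟨A, B, C, rfl⟩ := mem_TI p hp
  simp only [map_add, v102_f, v05_f, v35_f, v102_fx, v05_fx, v35_fx,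
    v102_fy, v05_fy, v35_fy]
  ring

lemma m_eq (a b : ℕ) : (MvPowerSeries.X 0 : R2) ^ a * MvPowerSeries.X 1 ^ b
    = monomial (ee a b) 1 := by
  rw [X_pow_eq, X_pow_eq, monomial_mul_monomial, one_mul]; rfl

/-- The classes of x⁵y⁴, x¹⁰y², x¹⁴y in ℂ[[x,y]]/⟨f, ∂f/∂x, ∂f/∂y⟩ are ℂ-linearly
independent for f = (y³+x⁷)(y³+x¹⁰). -/
theorem monomials_linearly_independent_mod_tjurina :
    LinearIndependent ℂ
      ![Ideal.Quotient.mk (Ideal.span {fEx, pder 0 fEx, pder 1 fEx})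
          (MvPowerSeries.X 0 ^ 5 * MvPowerSeries.X 1 ^ 4),
        Ideal.Quotient.mk (Ideal.span {fEx, pder 0 fEx, pder 1 fEx})
          (MvPowerSeries.X 0 ^ 10 * MvPowerSeries.X 1 ^ 2),
        Ideal.Quotient.mk (Ideal.span {fEx, pder 0 fEx, pder 1 fEx})
          (MvPowerSeries.X 0 ^ 14 * MvPowerSeries.X 1 ^ 1)] := by
  classical
  rw [Fintype.linearIndependent_iff]
  intro g hg
  have smul_mk : ∀ (c : ℂ) (x : R2),
      c • Ideal.Quotient.mk TI x = Ideal.Quotient.mk TI (c • x) := fun c x => by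
    rw [← Ideal.Quotient.mkₐ_eq_mk ℂ, ← map_smul]
  rw [Fin.sum_univ_three] at hg
  simp only [Matrix.cons_val_zero, Matrix.cons_val_one, Matrix.head_cons,
    Matrix.cons_val_two, Matrix.tail_cons] at hg
  rw [show (Ideal.span {fEx, pder 0 fEx, pder 1 fEx}) = TI from rfl] at hg
  rw [smul_mk, smul_mk, smul_mk, ← map_add, ← map_add] at hg
  have hmem := Ideal.Quotient.eq_zero_iff_mem.mp hg
  rw [m_eq 5 4, m_eq 10 2, m_eq 14 1] at hmem
  have e1 := lam1_vanish _ hmem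
  have e2 := lam2_vanish _ hmem
  have e3 := lam3_vanish _ hmem
  simp only [map_add, LinearMap.map_smul, coeff_monomial, ee_eq_iff, smul_eq_mul] at e1 e2 e3
  norm_num at e1 e2 e3
  intro i
  fin_cases i
  · exact e1
  · -- e2 : combination gives g 1
    simpa using e2
  · exact e3
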